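/- arXiv:1809.09582 — 2 statements merged into one kernel-verified Lean document; each statement's English description precedes it below -/
import Mathlib

section
/- In the setting of contextual bandits with cross-learning with stochastic rewards and an adversarially fixed context sequence, fix any Δ_min > 0 and set m_i(c) = 8 · log T / Δ_i(c)² for each arm i and context c. Define the pre-regret Reg_Pre = Σ_{i=1}^K Σ_{c=1}^C Σ_{t=1}^T Δ_i(c) · 1{I_t = i, c_t = c, τ_{i,t} ≤ m_i(c), Δ_i(c) ≥ Δ_min}. Then for T ≥ 2, E[Reg_Pre] ≤ 16 · K · log T / Δ_min. -/
/-!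
The bound holds for every realisation of the pulls, hence in expectation. Fix an arm `i`. On a
round counted by the pre-regret with context `c`, arm `i` is pulled for the `τ`-th time with
`τ Δ_i(c)² ≤ 8 log T`, so `Δ_i(c) ≤ √(8 log T / τ)` and `τ ≤ 8 log T / Δ_min²`. Since `τ`
increases strictly along the pulls of arm `i`, these rounds contribute at most
`∑_{n ≤ 8 log T / Δ_min²} √(8 log T / n) ≤ 2 √(8 log T) · √(8 log T) / Δ_min = 16 log T / Δ_min`.
-/

open MeasureTheory ProbabilityTheory Finset
open scoped Classical

/-- Number of pulls of arm `i` among rounds `0, …, t-1`. -/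
noncomputable def tauCL {K : ℕ} (I : ℕ → Fin K) (i : Fin K) (t : ℕ) : ℕ :=
  ((Finset.range t).filter (fun s => I s = i)).card

/-- Cross-learned cumulative reward of arm `i` at context `c` over rounds `s < t`
in which arm `i` was pulled. -/
noncomputable def sigCL {K C : ℕ} (r : Fin K → ℕ → Fin C → ℝ) (I : ℕ → Fin K)
    (i : Fin K) (t : ℕ) (c : Fin C) : ℝ :=
  ∑ s ∈ (Finset.range t).filter (fun s => I s = i), r i s c

/-- The UCB1.CL index of arm `i` at round `t` under context `c`. -/
noncomputable def scoreCL {K C : ℕ} (T : ℕ) (r : Fin K → ℕ → Fin C → ℝ) (I : ℕ → Fin K)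
    (t : ℕ) (c : Fin C) (i : Fin K) : ℝ :=
  sigCL r I i t c / (tauCL I i t : ℝ) + Real.sqrt (2 * Real.log T / (tauCL I i t : ℝ))

open MeasureTheory Finset

lemma sum_Icc_one_div_sqrt_le (N : ℕ) : ∑ n ∈ Icc 1 N, 1 / √(n : ℝ) ≤ 2 * √N := by
  induction N with
  | zero => simp
  | succ N ih =>
    rw [sum_Icc_succ_top (by omega)]
    push_cast at ih ⊢
    have hN : √(N : ℝ) ^ 2 = N := Real.sq_sqrt (by positivity)
    have hN1 : √((N : ℝ) + 1) ^ 2 = N + 1 := Real.sq_sqrt (by positivity)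
    have hstep : 1 / √((N : ℝ) + 1) ≤ 2 * √((N : ℝ) + 1) - 2 * √N := by
      rw [div_le_iff₀ (by positivity)]
      nlinarith [Real.sqrt_nonneg (N : ℝ),
        sq_nonneg (2 * √(N : ℝ) * √((N : ℝ) + 1) - (2 * N + 1))]
    linarith

lemma sum_le_two_mul_div_of_count_mul_sq_le {ι : Type*} {A : Finset ι} {n : ι → ℕ} {x : ι → ℝ}
    {a Δ : ℝ} (ha : 0 ≤ a) (hΔ : 0 < Δ) (hn : Set.InjOn n A) (hpos : ∀ t ∈ A, 0 < n t)
    (hx : ∀ t ∈ A, Δ ≤ x t) (hnx : ∀ t ∈ A, n t * x t ^ 2 ≤ a) :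
    ∑ t ∈ A, x t ≤ 2 * a / Δ := by
  set N := ⌊a / Δ ^ 2⌋₊
  have hx_le : ∀ t ∈ A, x t ≤ √a / √(n t : ℝ) := by
    intro t ht
    have hnt : (0 : ℝ) < n t := by exact_mod_cast hpos t ht
    rw [← Real.sqrt_div' _ hnt.le, Real.le_sqrt (hΔ.le.trans (hx t ht)) (by positivity),
      le_div_iff₀ hnt]
    linarith [hnx t ht]
  have himage : A.image n ⊆ Icc 1 N := by
    intro k hk
    obtain ⟨t, ht, rfl⟩ := mem_image.mp hk
    refine mem_Icc.mpr ⟨hpos t ht, Nat.le_floor ?_⟩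
    rw [le_div_iff₀ (by positivity)]
    have hsq := pow_le_pow_left₀ hΔ.le (hx t ht) 2
    nlinarith [hnx t ht, (Nat.cast_nonneg (n t) : (0 : ℝ) ≤ n t)]
  have hsqrtN : √(N : ℝ) ≤ √a / Δ := by
    rw [← Real.sqrt_sq hΔ.le, ← Real.sqrt_div' _ (by positivity)]
    exact Real.sqrt_le_sqrt (Nat.floor_le (by positivity))
  calc ∑ t ∈ A, x t
      ≤ ∑ t ∈ A, √a / √(n t : ℝ) := sum_le_sum hx_le
    _ = ∑ k ∈ A.image n, √a / √(k : ℝ) := (sum_image (f := fun k : ℕ => √a / √(k : ℝ)) hn).symm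
    _ ≤ ∑ k ∈ Icc 1 N, √a / √(k : ℝ) :=
        sum_le_sum_of_subset_of_nonneg himage fun _ _ _ => by positivity
    _ = √a * ∑ k ∈ Icc 1 N, 1 / √(k : ℝ) := by simp_rw [mul_sum, mul_one_div]
    _ ≤ √a * (2 * (√a / Δ)) := by
        gcongr
        exact (sum_Icc_one_div_sqrt_le N).trans (by gcongr)
    _ = 2 * a / Δ := by rw [mul_left_comm, mul_div_assoc', Real.mul_self_sqrt ha, mul_div_assoc]

lemma tauCL_succ_of_eq {K : ℕ} {J : ℕ → Fin K} {i : Fin K} {t : ℕ} (h : J t = i) :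
    tauCL J i (t + 1) = tauCL J i t + 1 := by
  rw [tauCL, range_add_one, filter_insert, if_pos h, card_insert_of_notMem (by simp), tauCL]

lemma tauCL_mono {K : ℕ} (J : ℕ → Fin K) (i : Fin K) : Monotone (tauCL J i) :=
  fun _ _ hst => card_le_card (filter_subset_filter _ (range_subset_range.mpr hst))

lemma tauCL_succ_strictMonoOn {K : ℕ} (J : ℕ → Fin K) (i : Fin K) :
    StrictMonoOn (fun t => tauCL J i (t + 1)) {t | J t = i} := by
  intro s _ t ht hst
  have := tauCL_mono J i (show s + 1 ≤ t by omega)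
  simp only [tauCL_succ_of_eq (ht : J t = i)]
  omega

lemma preregret_le {K C T : ℕ} {Δmin : ℝ} (hΔ : 0 < Δmin) (g : Fin K → Fin C → ℝ)
    (ctx : ℕ → Fin C) (J : ℕ → Fin K) :
    ∑ i : Fin K, ∑ c : Fin C, ∑ t ∈ range T,
        (if J t = i ∧ ctx t = c ∧ (tauCL J i (t + 1) : ℝ) ≤ 8 * Real.log T / g i c ^ 2 ∧
            Δmin ≤ g i c
          then g i c else 0)
      ≤ 16 * K * Real.log T / Δmin := by
  have hL : 0 ≤ Real.log T := Real.log_natCast_nonneg T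
  have harm : ∀ i, ∑ c : Fin C, ∑ t ∈ range T,
      (if J t = i ∧ ctx t = c ∧ (tauCL J i (t + 1) : ℝ) ≤ 8 * Real.log T / g i c ^ 2 ∧
          Δmin ≤ g i c
        then g i c else 0) ≤ 16 * Real.log T / Δmin := by
    intro i
    -- only the context `c = ctx t` survives the sum over `c`
    rw [sum_comm]
    simp only [ite_and, sum_ite_irrel, sum_ite_eq, mem_univ, ↓reduceIte, sum_const_zero]
    simp only [← ite_and]
    rw [← sum_filter]
    have hpull : ∀ t ∈ (range T).filter (fun t => J t = i ∧
        (tauCL J i (t + 1) : ℝ) ≤ 8 * Real.log T / g i (ctx t) ^ 2 ∧ Δmin ≤ g i (ctx t)),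
        J t = i := fun t ht => (mem_filter.mp ht).2.1
    refine (sum_le_two_mul_div_of_count_mul_sq_le (a := 8 * Real.log T) (by positivity) hΔ
      ((tauCL_succ_strictMonoOn J i).injOn.mono hpull)
      (fun t ht => by simp [tauCL_succ_of_eq (hpull t ht)])
      (fun t ht => (mem_filter.mp ht).2.2.2) fun t ht => ?_).trans_eq (by ring)
    obtain ⟨-, hτ, hgap⟩ := (mem_filter.mp ht).2
    rwa [le_div_iff₀ (pow_pos (hΔ.trans_le hgap) 2)] at hτ
  calc _ ≤ ∑ _i : Fin K, 16 * Real.log T / Δmin := sum_le_sum fun i _ => harm i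
    _ = 16 * K * Real.log T / Δmin := by
        rw [sum_const, card_univ, Fintype.card_fin, nsmul_eq_mul]
        ring

lemma integral_le_of_forall_le {Ω : Type*} [MeasurableSpace Ω] {μ : Measure Ω}
    [IsProbabilityMeasure μ] {f : Ω → ℝ} {b : ℝ} (hb : 0 ≤ b) (hf : ∀ ω, f ω ≤ b) :
    ∫ ω, f ω ∂μ ≤ b := by
  by_cases hint : Integrable f μ
  · simpa using integral_mono hint (integrable_const b) hf
  · rwa [integral_undef hint]

/-- the pre-regret of UCB1.CL — the regret accumulated on rounds where the
chosen arm has been pulled at most `m_i(c) = 8 log T / Δ_i(c)²` times and its gap is at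
least `Δ_min` — has expectation at most `16 · K · log T / Δ_min`. -/
theorem ucb1cl_preregret :
    ∀ (K C T : ℕ), 1 ≤ K → 1 ≤ C → K ≤ T → 2 ≤ T →
    ∀ (Δmin : ℝ), 0 < Δmin →
    ∀ (Ω : Type) (_ : MeasurableSpace Ω) (μ : Measure Ω), IsProbabilityMeasure μ →
    ∀ (r : Ω → Fin K → ℕ → Fin C → ℝ) (F : Fin K → Fin C → Measure ℝ)
      (m : Fin K → Fin C → ℝ) (ctx : ℕ → Fin C) (I : Ω → ℕ → Fin K),
      (∀ i t c, Measurable (fun ω => r ω i t c)) →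
      (∀ ω i t c, r ω i t c ∈ Set.Icc (0:ℝ) 1) →
      (∀ i c, IsProbabilityMeasure (F i c)) →
      (∀ (i : Fin K) (t : Fin T) (c : Fin C),
        Measure.map (fun ω => r ω i (t : ℕ) c) μ = F i c) →
      iIndepFun
        (fun (p : Fin K × Fin T) ω => (fun c => r ω p.1 (p.2 : ℕ) c)) μ →
      (∀ i c, ∫ x, x ∂(F i c) = m i c) →
      (∀ ω t (ht : t < K), I ω t = ⟨t, ht⟩) →
      (∀ ω t, K ≤ t → t < T →
        (∀ j, scoreCL T (r ω) (I ω) t (ctx t) j ≤ scoreCL T (r ω) (I ω) t (ctx t) (I ω t)) ∧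
        (∀ j, (∀ j', scoreCL T (r ω) (I ω) t (ctx t) j' ≤ scoreCL T (r ω) (I ω) t (ctx t) j)
          → I ω t ≤ j)) →
      -- E[Reg_Pre] ≤ 16 K log T / Δ_min, where Reg_Pre sums, over arms i, contexts c and
      -- rounds t, the gap Δ_i(c) on the event
      -- {I_t = i, c_t = c, τ_{i,t} ≤ 8 log T / Δ_i(c)², Δ_i(c) ≥ Δ_min}
      ∫ ω, (∑ i : Fin K, ∑ c : Fin C, ∑ t ∈ Finset.range T,
          (if (I ω t = i ∧ ctx t = c ∧
                (tauCL (I ω) i (t + 1) : ℝ) ≤ 8 * Real.log T / ((⨆ j, m j c) - m i c) ^ 2 ∧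
                Δmin ≤ (⨆ j, m j c) - m i c)
            then ((⨆ j, m j c) - m i c) else 0)) ∂μ
        ≤ 16 * K * Real.log T / Δmin := by
  intro K C T _ _ _ _ Δmin hΔ Ω _ μ _ r F m ctx I _ _ _ _ _ _ _ _
  exact integral_le_of_forall_le (by positivity) fun ω =>
    preregret_le hΔ (fun i c => (⨆ j, m j c) - m i c) ctx (I ω)
end

section
/- If a finite directed graph G with all self-loops is a disjoint union of r cliques — i.e., its vertex set partitions into r sets, each of which is a subclique, with no edges between distinct parts — then ι(G) = ν₂(G) = λ(G) = κ(G) = r. -/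
/-!
The labelling `P` has a section picking one vertex from each clique; these `r` vertices are
pairwise non-adjacent, so `r ≤ ι(G) ≤ λ(G)`. An acyclic family meets each part of a clique cover
at most once, so `λ(G) ≤ κ(G)`, and `P` is itself a clique cover with `r` parts, so `κ(G) ≤ r`.

For `ν₂`, the in-neighbourhood of `v` is its own clique, so the sum collapses to `∑ₖ √mₖ`, where
`mₖ` is the weight of the `k`-th clique. By Cauchy–Schwarz its square is at most `r ∑ₖ mₖ = r`,
with equality when every clique has weight `1 / r`.
-/

open Finset

/-- The independence number `ι(G)`: the largest `r` such that there are `r` distinct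
vertices with no edge between any two distinct ones. -/
noncomputable def indepNumber {V : Type*} [Fintype V] (adj : V → V → Prop) : ℕ :=
  sSup {r : ℕ | ∃ f : Fin r → V, Function.Injective f ∧
    ∀ i j : Fin r, i ≠ j → ¬ adj (f i) (f j)}

/-- The maximum acyclic subgraph number `λ(G)`. -/
noncomputable def acyclicNumber {V : Type*} [Fintype V] (adj : V → V → Prop) : ℕ :=
  sSup {r : ℕ | ∃ f : Fin r → V, Function.Injective f ∧
    ∀ i j : Fin r, j < i → ¬ adj (f i) (f j)}

/-- The clique covering number `κ(G)`: the least `r` such that the vertices can be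
labelled by `Fin r` with every pair of equally-labelled vertices joined by an edge
(equivalently, the least size of a partition of `V` into subcliques). -/
noncomputable def cliqueCoverNumber {V : Type*} [Fintype V] (adj : V → V → Prop) : ℕ :=
  sInf {r : ℕ | ∃ P : V → Fin r, ∀ u v, P u = P v → adj u v}

/-- The quantity `ν₂(G)`: the supremum over positive vertex weightings `f` summing to 1 of
`(∑_v f v / √(∑_{w ∈ I(v)} f w))²`. -/
noncomputable def nuTwo {V : Type*} [Fintype V] (adj : V → V → Prop) [DecidableRel adj] : ℝ :=
  sSup {x : ℝ | ∃ f : V → ℝ, (∀ v, 0 < f v) ∧ (∑ v, f v) = 1 ∧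
    x = (∑ v, f v / Real.sqrt (∑ w ∈ Finset.univ.filter (fun w => adj w v), f w)) ^ 2}

section Combinatorial

variable {V : Type*} [Fintype V] {adj : V → V → Prop}

lemma bddAbove_setOf_exists_injective (p : ∀ r, (Fin r → V) → Prop) :
    BddAbove {r : ℕ | ∃ f : Fin r → V, Function.Injective f ∧ p r f} :=
  ⟨Fintype.card V, fun _ ⟨f, hf, _⟩ => by simpa using Fintype.card_le_of_injective f hf⟩

lemma le_indepNumber {r : ℕ} {f : Fin r → V} (hf : Function.Injective f)
    (hindep : ∀ i j, i ≠ j → ¬ adj (f i) (f j)) : r ≤ indepNumber adj :=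
  le_csSup (bddAbove_setOf_exists_injective _) ⟨f, hf, hindep⟩

lemma le_acyclicNumber {r : ℕ} {f : Fin r → V} (hf : Function.Injective f)
    (hacyc : ∀ i j, j < i → ¬ adj (f i) (f j)) : r ≤ acyclicNumber adj :=
  le_csSup (bddAbove_setOf_exists_injective _) ⟨f, hf, hacyc⟩

lemma indepNumber_le_acyclicNumber : indepNumber adj ≤ acyclicNumber adj :=
  csSup_le' fun _ ⟨_, hf, hindep⟩ => le_acyclicNumber hf fun i j hji => hindep i j hji.ne'

lemma acyclicNumber_le_of_cliqueCover {s : ℕ} (Q : V → Fin s)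
    (hQ : ∀ u v, Q u = Q v → adj u v) : acyclicNumber adj ≤ s := by
  refine csSup_le' fun t ⟨f, hf, hacyc⟩ => ?_
  have hinj : Function.Injective (Q ∘ f) := by
    intro i j hij
    rcases lt_trichotomy i j with hlt | heq | hgt
    · exact absurd (hQ _ _ hij.symm) (hacyc j i hlt)
    · exact heq
    · exact absurd (hQ _ _ hij) (hacyc i j hgt)
  simpa using Fintype.card_le_of_injective _ hinj

lemma acyclicNumber_le_cliqueCoverNumber (hrefl : ∀ v, adj v v) :
    acyclicNumber adj ≤ cliqueCoverNumber adj := by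
  have hcover : ∃ Q : V → Fin (Fintype.card V), ∀ u v, Q u = Q v → adj u v :=
    ⟨Fintype.equivFin V, fun u v huv => (Fintype.equivFin V).injective huv ▸ hrefl u⟩
  obtain ⟨Q, hQ⟩ :=
    Nat.sInf_mem (s := {r : ℕ | ∃ Q : V → Fin r, ∀ u v, Q u = Q v → adj u v}) ⟨_, hcover⟩
  exact acyclicNumber_le_of_cliqueCover Q hQ

lemma cliqueCoverNumber_le {s : ℕ} (Q : V → Fin s) (hQ : ∀ u v, Q u = Q v → adj u v) :
    cliqueCoverNumber adj ≤ s :=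
  Nat.sInf_le ⟨Q, hQ⟩

end Combinatorial

section NuTwo

variable {V ι : Type*} [Fintype V] [Fintype ι] [DecidableEq ι]

lemma sum_div_sqrt_fiber_eq_sum_sqrt (P : V → ι) (f : V → ℝ) :
    ∑ v, f v / √(∑ w ∈ univ.filter (fun w => P w = P v), f w)
      = ∑ k, √(∑ v ∈ univ.filter (fun v => P v = k), f v) := by
  rw [← sum_fiberwise univ P]
  refine sum_congr rfl fun k _ => ?_
  calc ∑ v ∈ univ.filter (fun v => P v = k), f v / √(∑ w ∈ univ.filter (fun w => P w = P v), f w)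
      = ∑ v ∈ univ.filter (fun v => P v = k), f v / √(∑ w ∈ univ.filter (fun w => P w = k), f w) :=
        sum_congr rfl fun v hv => by rw [(mem_filter.mp hv).2]
    _ = √(∑ v ∈ univ.filter (fun v => P v = k), f v) := by rw [← sum_div, Real.div_sqrt]

variable {adj : V → V → Prop} [DecidableRel adj] {P : V → ι}

lemma sum_div_sqrt_inNbhd_eq_sum_sqrt (hadj : ∀ u v, adj u v ↔ P u = P v) (f : V → ℝ) :
    ∑ v, f v / √(∑ w ∈ univ.filter (fun w => adj w v), f w)
      = ∑ k, √(∑ v ∈ univ.filter (fun v => P v = k), f v) := by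
  simp_rw [hadj]
  exact sum_div_sqrt_fiber_eq_sum_sqrt P f

lemma sq_sum_div_sqrt_inNbhd_le_card (hadj : ∀ u v, adj u v ↔ P u = P v) {f : V → ℝ}
    (hf : ∀ v, 0 ≤ f v) (hsum : ∑ v, f v = 1) :
    (∑ v, f v / √(∑ w ∈ univ.filter (fun w => adj w v), f w)) ^ 2 ≤ Fintype.card ι := by
  rw [sum_div_sqrt_inNbhd_eq_sum_sqrt hadj]
  calc (∑ k, √(∑ v ∈ univ.filter (fun v => P v = k), f v)) ^ 2
      ≤ #(univ : Finset ι) * ∑ k, √(∑ v ∈ univ.filter (fun v => P v = k), f v) ^ 2 :=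
        sq_sum_le_card_mul_sum_sq
    _ = Fintype.card ι := by
        simp_rw [Real.sq_sqrt (sum_nonneg fun v _ => hf v), sum_fiberwise, hsum, card_univ, mul_one]

lemma exists_pos_forall_sum_fiber_eq (hP : Function.Surjective P) :
    ∃ f : V → ℝ, (∀ v, 0 < f v) ∧
      ∀ k, ∑ v ∈ univ.filter (fun v => P v = k), f v = (Fintype.card ι : ℝ)⁻¹ := by
  refine ⟨fun v => ((Fintype.card ι : ℝ) * #(univ.filter (fun w => P w = P v)))⁻¹,
    fun v => ?_, fun k => ?_⟩
  · have : 0 < Fintype.card ι := Fintype.card_pos_iff.mpr ⟨P v⟩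
    have : 0 < #(univ.filter (fun w => P w = P v)) := card_pos.mpr ⟨v, by simp⟩
    positivity
  · have hk : #(univ.filter (fun w => P w = k)) ≠ 0 :=
      card_ne_zero.mpr ⟨(hP k).choose, by simpa using (hP k).choose_spec⟩
    calc ∑ v ∈ univ.filter (fun v => P v = k),
          ((Fintype.card ι : ℝ) * #(univ.filter (fun w => P w = P v)))⁻¹
        = ∑ v ∈ univ.filter (fun v => P v = k),
            ((Fintype.card ι : ℝ) * #(univ.filter (fun w => P w = k)))⁻¹ :=
          sum_congr rfl fun v hv => by rw [(mem_filter.mp hv).2]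
      _ = (Fintype.card ι : ℝ)⁻¹ := by
          rw [sum_const, nsmul_eq_mul]
          field_simp

lemma nuTwo_eq_card (hP : Function.Surjective P) (hadj : ∀ u v, adj u v ↔ P u = P v) :
    nuTwo adj = Fintype.card ι := by
  have hupper : ∀ x ∈ {x : ℝ | ∃ f : V → ℝ, (∀ v, 0 < f v) ∧ (∑ v, f v) = 1 ∧
      x = (∑ v, f v / √(∑ w ∈ univ.filter (fun w => adj w v), f w)) ^ 2}, x ≤ Fintype.card ι :=
    fun _ ⟨_, hf, hsum, hx⟩ => hx ▸ sq_sum_div_sqrt_inNbhd_le_card hadj (fun v => (hf v).le) hsum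
  refine le_antisymm (Real.sSup_le hupper (Nat.cast_nonneg _)) ?_
  rcases isEmpty_or_nonempty ι with hι | hι
  · rw [Fintype.card_eq_zero, Nat.cast_zero]
    exact Real.sSup_nonneg fun _ ⟨_, _, _, hx⟩ => hx ▸ sq_nonneg _
  obtain ⟨f, hf, hfiber⟩ := exists_pos_forall_sum_fiber_eq hP
  have hcard : (Fintype.card ι : ℝ) ≠ 0 := Nat.cast_ne_zero.mpr Fintype.card_ne_zero
  have hsum : ∑ v, f v = 1 := by
    rw [← sum_fiberwise univ P, sum_congr rfl fun k _ => hfiber k, sum_const, card_univ,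
      nsmul_eq_mul, mul_inv_cancel₀ hcard]
  refine le_csSup ⟨_, hupper⟩ ⟨f, hf, hsum, ?_⟩
  rw [sum_div_sqrt_inNbhd_eq_sum_sqrt hadj, sum_congr rfl fun k _ => by rw [hfiber k], sum_const,
    card_univ, nsmul_eq_mul, mul_pow, Real.sq_sqrt (by positivity)]
  field_simp

end NuTwo

/-- if a finite directed graph with all self-loops is a disjoint union of
`r` cliques — i.e. there is a surjective labelling `P : V → Fin r` such that `adj u v`
holds exactly when `P u = P v` — then `ι(G) = ν₂(G) = λ(G) = κ(G) = r`. -/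
theorem graph_invariants_of_disjoint_cliques (V : Type*) [Fintype V]
    (adj : V → V → Prop) [DecidableRel adj] (r : ℕ) (P : V → Fin r)
    (hsurj : Function.Surjective P)
    (hadj : ∀ u v, adj u v ↔ P u = P v) :
    indepNumber adj = r ∧ nuTwo adj = (r : ℝ) ∧
      acyclicNumber adj = r ∧ cliqueCoverNumber adj = r := by
  obtain ⟨g, hPg⟩ := hsurj.hasRightInverse
  have hindep : ∀ i j, i ≠ j → ¬ adj (g i) (g j) := fun i j hij h =>
    hij (by rwa [hadj, hPg, hPg] at h)
  have hcover : ∀ u v, P u = P v → adj u v := fun u v => (hadj u v).mpr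
  have h₁ : r ≤ indepNumber adj := le_indepNumber hPg.injective hindep
  have h₂ : indepNumber adj ≤ acyclicNumber adj := indepNumber_le_acyclicNumber
  have h₃ : acyclicNumber adj ≤ cliqueCoverNumber adj :=
    acyclicNumber_le_cliqueCoverNumber fun v => hcover v v rfl
  have h₄ : cliqueCoverNumber adj ≤ r := cliqueCoverNumber_le P hcover
  refine ⟨by omega, ?_, by omega, by omega⟩
  simpa using nuTwo_eq_card hsurj hadj
end
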